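/- For every even positive integer d ≥ 4, there exists a set of d − 1 mutually quasi-unbiased weighing matrices for parameters (d, 2, 4, 1), i.e., d − 1 weighing matrices of order d and weight 2 such that for any two distinct members W_i, W_j the matrix W_i·W_jᵀ is a weighing matrix of weight 4; this attains the upper bound f ≤ d − 1. -/
import Mathlib


open Matrix

/-- `W` is a weighing matrix of order `d` and weight `k`: a `d × d` real matrix with all
entries in `{-1, 0, 1}` such that `W * Wᵀ = k • 1`. -/
def IsWeighing {d : ℕ} (k : ℝ) (W : Matrix (Fin d) (Fin d) ℝ) : Prop :=
  (∀ i j, W i j = -1 ∨ W i j = 0 ∨ W i j = 1) ∧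
    W * Wᵀ = k • (1 : Matrix (Fin d) (Fin d) ℝ)

/-- A family of mutually unbiased weighing matrices of order `d` and weight `k`:
each member is a weighing matrix of weight `k`, and for distinct members
`(1/√k) • (Wᵢ * Wⱼᵀ)` is again a weighing matrix of weight `k`. -/
def MUWM {d f : ℕ} (k : ℝ) (W : Fin f → Matrix (Fin d) (Fin d) ℝ) : Prop :=
  (∀ i, IsWeighing k (W i)) ∧
    ∀ i j, i ≠ j → IsWeighing k ((Real.sqrt k)⁻¹ • (W i * (W j)ᵀ))

/-- A family of mutually quasi-unbiased weighing matrices for parameters `(d, k, l, a)`: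
each member is a weighing matrix of weight `k`, and for distinct members
`(1/√a) • (Wᵢ * Wⱼᵀ)` is a weighing matrix of weight `l`. -/
def MQUWM {d f : ℕ} (k l a : ℝ) (W : Fin f → Matrix (Fin d) (Fin d) ℝ) : Prop :=
  (∀ i, IsWeighing k (W i)) ∧
    ∀ i j, i ≠ j → IsWeighing l ((Real.sqrt a)⁻¹ • (W i * (W j)ᵀ))

/- ### Auxiliary construction: from a family of pairwise "disjoint" fixed-point-free
involutions on `Fin d` (a signed 1-factorization of the complete graph) we build the
desired family of matrices. -/

/-- The sign attached to a point `x` for the involution `π t`. -/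
noncomputable def sgn8 {d f : ℕ} (π : Fin f → Fin d → Fin d) (t : Fin f) (x : Fin d) : ℝ :=
  if x < π t x then 1 else -1

/-- The weighing matrix built from the involution `π t`. -/
noncomputable def Wmat8 {d f : ℕ} (π : Fin f → Fin d → Fin d) (t : Fin f) :
    Matrix (Fin d) (Fin d) ℝ :=
  Matrix.of fun x y => if y = x then 1 else if y = π t x then sgn8 π t x else 0

lemma weighing_transpose_mul8 {d : ℕ} (k : ℝ) (hk : k ≠ 0)
    (W : Matrix (Fin d) (Fin d) ℝ) (h : W * Wᵀ = k • 1) : Wᵀ * W = k • 1 := by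
  have h1 : W * (k⁻¹ • Wᵀ) = 1 := by
    rw [Matrix.mul_smul, h, smul_smul, inv_mul_cancel₀ hk, one_smul]
  have h2 : (k⁻¹ • Wᵀ) * W = 1 := mul_eq_one_comm.mp h1
  calc Wᵀ * W = k • ((k⁻¹ • Wᵀ) * W) := by
        rw [Matrix.smul_mul, smul_smul, mul_inv_cancel₀ hk, one_smul]
    _ = k • 1 := by rw [h2]

section Key

variable {d f : ℕ} (π : Fin f → Fin d → Fin d)

lemma sgn8_sq (t : Fin f) (x : Fin d) : sgn8 π t x * sgn8 π t x = 1 := by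
  unfold sgn8; split_ifs <;> norm_num

lemma sgn8_cases (t : Fin f) (x : Fin d) : sgn8 π t x = 1 ∨ sgn8 π t x = -1 := by
  unfold sgn8; split_ifs <;> simp

variable (hinv : ∀ t x, π t (π t x) = x) (hfix : ∀ t x, π t x ≠ x)

include hinv hfix in
lemma sgn8_anti (t : Fin f) (x : Fin d) : sgn8 π t (π t x) = - sgn8 π t x := by
  unfold sgn8
  rw [hinv]
  rcases lt_or_gt_of_ne (Ne.symm (hfix t x)) with h | h
  · simp [h, not_lt.mpr h.le]
  · simp [h, not_lt.mpr h.le]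

lemma Wmat8_entry (t : Fin f) (x y : Fin d) :
    Wmat8 π t x y = -1 ∨ Wmat8 π t x y = 0 ∨ Wmat8 π t x y = 1 := by
  unfold Wmat8
  simp only [Matrix.of_apply]
  rcases sgn8_cases π t x with h | h <;> split_ifs <;> simp [h]

include hfix in
lemma Wmat8_row (t : Fin f) (x z : Fin d) :
    Wmat8 π t x z = (if z = x then (1:ℝ) else 0) + (if z = π t x then sgn8 π t x else 0) := by
  unfold Wmat8
  simp only [Matrix.of_apply]
  by_cases h1 : z = x
  · subst h1
    simp [Ne.symm (hfix t z)]
  · by_cases h2 : z = π t x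
    · simp [h1, h2, hfix t x]
    · simp [h1, h2]

lemma Wmat8_diag (t : Fin f) (x : Fin d) : Wmat8 π t x x = 1 := by
  unfold Wmat8; simp

include hfix in
lemma Wmat8_offdiag (t : Fin f) (x : Fin d) : Wmat8 π t x (π t x) = sgn8 π t x := by
  unfold Wmat8
  simp [hfix t x]

lemma Wmat8_support (t : Fin f) (x z : Fin d) (h : Wmat8 π t x z ≠ 0) :
    z = x ∨ z = π t x := by
  by_contra hc
  push_neg at hc
  apply h
  unfold Wmat8
  simp only [Matrix.of_apply]
  rw [if_neg hc.1, if_neg hc.2]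

include hfix in
lemma Wmat8_mul (t u : Fin f) (x y : Fin d) :
    (Wmat8 π t * (Wmat8 π u)ᵀ) x y
      = Wmat8 π u y x + sgn8 π t x * Wmat8 π u y (π t x) := by
  have hsum : ∀ (a : Fin d) (c : ℝ) (g : Fin d → ℝ),
      (∑ z, (if z = a then c else 0) * g z) = c * g a := by
    intro a c g
    rw [Finset.sum_eq_single a]
    · simp
    · intro b _ hb; simp [hb]
    · intro h; exact absurd (Finset.mem_univ a) h
  rw [Matrix.mul_apply]
  simp only [Matrix.transpose_apply]
  calc (∑ z, Wmat8 π t x z * Wmat8 π u y z)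
      = ∑ z, ((if z = x then (1:ℝ) else 0) * Wmat8 π u y z
            + (if z = π t x then sgn8 π t x else 0) * Wmat8 π u y z) := by
        apply Finset.sum_congr rfl
        intro z _
        rw [Wmat8_row π hfix t x z]
        ring
    _ = (∑ z, (if z = x then (1:ℝ) else 0) * Wmat8 π u y z)
        + ∑ z, (if z = π t x then sgn8 π t x else 0) * Wmat8 π u y z := by
        rw [Finset.sum_add_distrib]
    _ = 1 * Wmat8 π u y x + sgn8 π t x * Wmat8 π u y (π t x) := by
        rw [hsum, hsum]
    _ = Wmat8 π u y x + sgn8 π t x * Wmat8 π u y (π t x) := by ring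

include hinv hfix in
lemma Wmat8_self (t : Fin f) :
    Wmat8 π t * (Wmat8 π t)ᵀ = (2:ℝ) • (1 : Matrix (Fin d) (Fin d) ℝ) := by
  ext x y
  rw [Wmat8_mul π hfix t t x y]
  by_cases hxy : y = x
  · subst hxy
    rw [Wmat8_diag, Wmat8_offdiag π hfix, sgn8_sq]
    norm_num [Matrix.smul_apply, Matrix.one_apply]
  · rw [Matrix.smul_apply, Matrix.one_apply_ne (Ne.symm hxy), smul_zero]
    by_cases hy : y = π t x
    · subst hy
      have h1 : Wmat8 π t (π t x) x = sgn8 π t (π t x) := by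
        have h := Wmat8_offdiag π hfix t (π t x)
        rwa [hinv t x] at h
      rw [h1, Wmat8_diag, sgn8_anti π hinv hfix]
      ring
    · have h1 : Wmat8 π t y x = 0 := by
        by_contra h
        rcases Wmat8_support π t y x h with h' | h'
        · exact hxy h'.symm
        · apply hy
          rw [h', hinv]
      have h2 : Wmat8 π t y (π t x) = 0 := by
        by_contra h
        rcases Wmat8_support π t y (π t x) h with h' | h'
        · exact hy h'.symm
        · apply hxy
          have h'' := congrArg (π t) h'
          rw [hinv, hinv] at h''
          exact h''.symm
      rw [h1, h2]
      ring

include hinv hfix in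
lemma Wmat8_isWeighing (t : Fin f) : IsWeighing (2:ℝ) (Wmat8 π t) :=
  ⟨Wmat8_entry π t, Wmat8_self π hinv hfix t⟩

variable (hdis : ∀ t s x, π t x = π s x → t = s)

include hinv hfix hdis in
lemma Wmat8_cross_entry (t u : Fin f) (htu : t ≠ u) (x y : Fin d) :
    (Wmat8 π t * (Wmat8 π u)ᵀ) x y = -1 ∨ (Wmat8 π t * (Wmat8 π u)ᵀ) x y = 0 ∨
      (Wmat8 π t * (Wmat8 π u)ᵀ) x y = 1 := by
  rw [Wmat8_mul π hfix t u x y]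
  by_cases h1 : Wmat8 π u y x = 0
  · rw [h1]
    rcases sgn8_cases π t x with hs | hs <;>
      rcases Wmat8_entry π u y (π t x) with h | h | h <;>
      rw [hs, h] <;> norm_num
  · have h2 : Wmat8 π u y (π t x) = 0 := by
      by_contra h2
      rcases Wmat8_support π u y x h1 with hx | hx <;>
        rcases Wmat8_support π u y (π t x) h2 with hz | hz
      · exact hfix t x (hz.trans hx.symm)
      · subst hx
        exact htu (hdis t u x hz)
      · apply htu
        apply hdis t u x
        rw [hz, hx, hinv]
      · rw [← hx] at hz
        exact hfix t x hz
    rw [h2]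
    rcases Wmat8_entry π u y x with h | h | h <;> rw [h] <;> norm_num

include hinv hfix in
lemma Wmat8_cross_mul (t u : Fin f) :
    (Wmat8 π t * (Wmat8 π u)ᵀ) * ((Wmat8 π t * (Wmat8 π u)ᵀ))ᵀ
      = (4:ℝ) • (1 : Matrix (Fin d) (Fin d) ℝ) := by
  have hu : (Wmat8 π u)ᵀ * Wmat8 π u = (2:ℝ) • 1 :=
    weighing_transpose_mul8 (2:ℝ) (by norm_num) _ (Wmat8_self π hinv hfix u)
  rw [Matrix.transpose_mul, Matrix.transpose_transpose]
  calc (Wmat8 π t * (Wmat8 π u)ᵀ) * (Wmat8 π u * (Wmat8 π t)ᵀ)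
      = Wmat8 π t * (((Wmat8 π u)ᵀ * Wmat8 π u) * (Wmat8 π t)ᵀ) := by
        rw [Matrix.mul_assoc, Matrix.mul_assoc]
    _ = (4:ℝ) • 1 := by
        rw [hu, Matrix.smul_mul, Matrix.mul_smul, one_mul, Wmat8_self π hinv hfix t,
          smul_smul]
        norm_num

include hinv hfix hdis in
lemma Wmat8_mquwm : MQUWM (2:ℝ) (4:ℝ) (1:ℝ) (Wmat8 π) := by
  constructor
  · exact Wmat8_isWeighing π hinv hfix
  · intro t u htu
    rw [Real.sqrt_one, inv_one, one_smul]
    exact ⟨Wmat8_cross_entry π hinv hfix hdis t u htu, Wmat8_cross_mul π hinv hfix t u⟩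

end Key

/- ### The round-robin 1-factorization of the complete graph on `Option (ZMod n)`. -/

/-- The `c`-th matching of the round-robin 1-factorization, as an involution. -/
def pi8 {n : ℕ} (c : ZMod n) : Option (ZMod n) → Option (ZMod n)
  | none => some c
  | some x => if x = c then none else some (2 * c - x)

section Pi8

variable {n : ℕ} (hcancel : ∀ a b : ZMod n, 2 * a = 2 * b → a = b)

include hcancel in
lemma pi8_inv (c : ZMod n) (v : Option (ZMod n)) : pi8 c (pi8 c v) = v := by
  match v with
  | none => simp [pi8]
  | some x =>
    by_cases h : x = c
    · simp [pi8, h]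
    · have h2 : ¬ (2 * c - x = c) := by
        intro hc
        exact h (hcancel x c (by linear_combination -2 * hc))
      simp only [pi8, if_neg h, if_neg h2]
      congr 1
      ring

include hcancel in
lemma pi8_fix (c : ZMod n) (v : Option (ZMod n)) : pi8 c v ≠ v := by
  match v with
  | none => simp [pi8]
  | some x =>
    by_cases h : x = c
    · simp [pi8, h]
    · simp only [pi8, if_neg h, ne_eq, Option.some.injEq]
      intro hc
      exact h (hcancel x c (by linear_combination -hc))

include hcancel in
lemma pi8_dis (c c' : ZMod n) (v : Option (ZMod n)) (h : pi8 c v = pi8 c' v) : c = c' := by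
  match v with
  | none => simpa [pi8] using h
  | some x =>
    by_cases h1 : x = c <;> by_cases h2 : x = c'
    · rw [← h1, ← h2]
    · rw [pi8, pi8, if_pos h1, if_neg h2] at h
      exact absurd h (by simp)
    · rw [pi8, pi8, if_neg h1, if_pos h2] at h
      exact absurd h (by simp)
    · rw [pi8, pi8, if_neg h1, if_neg h2, Option.some.injEq] at h
      exact hcancel c c' (by linear_combination h)

end Pi8

/-- for every even `d ≥ 4` there exist `d - 1` mutually quasi-unbiased
weighing matrices for parameters `(d, 2, 4, 1)`, attaining the bound `f ≤ d - 1`. -/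
theorem stmt8 (d : ℕ) (hd : 4 ≤ d) (hde : Even d) :
    ∃ W : Fin (d - 1) → Matrix (Fin d) (Fin d) ℝ,
      MQUWM (2 : ℝ) (4 : ℝ) (1 : ℝ) W := by
  have hd' : d = (d - 1) + 1 := by omega
  haveI : NeZero (d - 1) := ⟨by omega⟩
  have hodd : Odd (d - 1) := by
    rcases Nat.even_or_odd (d - 1) with h | h
    · exfalso
      have : Odd d := by rw [hd']; exact Even.add_one h
      exact (Nat.not_odd_iff_even.mpr hde) this
    · exact h
  have h2unit : IsUnit (2 : ZMod (d - 1)) := by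
    have h20 : ((2:ℕ) : ZMod (d - 1)) = (2 : ZMod (d - 1)) := by push_cast; ring
    rw [← h20]
    exact (ZMod.isUnit_iff_coprime 2 (d - 1)).mpr (Nat.coprime_two_left.mpr hodd)
  have hcancel : ∀ a b : ZMod (d - 1), 2 * a = 2 * b → a = b := fun a b h =>
    h2unit.mul_left_cancel h
  have hcard : Fintype.card (Fin d) = Fintype.card (Option (ZMod (d - 1))) := by
    rw [Fintype.card_fin, Fintype.card_option, ZMod.card]
    omega
  let e : Fin d ≃ Option (ZMod (d - 1)) := Fintype.equivOfCardEq hcard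
  have htc : ∀ t s : Fin (d - 1), ((t : ℕ) : ZMod (d - 1)) = ((s : ℕ) : ZMod (d - 1)) →
      t = s := by
    intro t s h
    have ht := ZMod.val_cast_of_lt t.isLt
    have hs := ZMod.val_cast_of_lt s.isLt
    apply Fin.ext
    rw [← ht, ← hs, h]
  refine ⟨Wmat8 (fun t x => e.symm (pi8 ((t : ℕ) : ZMod (d - 1)) (e x))),
    Wmat8_mquwm _ ?_ ?_ ?_⟩
  · intro t x
    rw [Equiv.apply_symm_apply, pi8_inv hcancel, Equiv.symm_apply_apply]
  · intro t x
    intro h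
    apply pi8_fix hcancel ((t : ℕ) : ZMod (d - 1)) (e x)
    have h' := congrArg e h
    rwa [Equiv.apply_symm_apply] at h'
  · intro t s x
    intro h
    exact htc t s (pi8_dis hcancel _ _ (e x) (e.symm.injective h))
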